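/- arXiv:2102.02123 — 3 statements merged into one kernel-verified Lean document; each statement's English description precedes it below -/
import Mathlib

section
/- Let κ be a Poisson random variable with mean Λ = Δ(U − L), where Δ > 0 and L ≤ U are reals. Let χ_1, …, χ_κ be, conditionally on κ, i.i.d. uniform on [t₀, t₀+Δ], independent of κ, and let φ : [t₀, t₀+Δ] → [L, U] be a measurable function. Then E[ e^{−LΔ} (U−L)^{−κ} ∏_{k=1}^{κ} (U − φ(χ_k)) ] = exp( −∫_{t₀}^{t₀+Δ} φ(t) dt ). -/
/-!
On the event `{κ = n}` the estimator equals `e^{-LΔ} ∏_{k<n} Z_k` with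
`Z_k = (U - φ(χ_k)) / (U - L) ∈ [0, 1]`. By independence each such term has expectation
`P(κ = n) m^n`, where `m = E Z_k = (UΔ - ∫φ) / (Δ(U - L))`, so the expectation is
`e^{-LΔ}` times the Poisson generating function `∑ P(κ = n) m^n = exp(Δ(U - L)(m - 1))`,
which equals `exp(-∫φ)`. The bound `|Z_k| ≤ 1` makes the series of terms converge absolutely,
so that expectation and summation can be exchanged.
-/

open MeasureTheory ProbabilityTheory Real

open scoped NNReal

universe u

lemma hasSum_poissonMeasure_real_mul_pow (r : ℝ≥0) (x : ℝ) :
    HasSum (fun n => (poissonMeasure r).real {n} * x ^ n) (exp (r * (x - 1))) := by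
  have h := (NormedSpace.expSeries_div_hasSum_exp ((r : ℝ) * x)).mul_left (exp (-r))
  rw [← exp_eq_exp_ℝ, ← exp_add, neg_add_eq_sub, ← mul_sub_one] at h
  convert! h using 1
  funext n
  rw [poissonMeasure_real_singleton, mul_pow]
  ring

lemma abs_sub_div_sub_le_one {L U y : ℝ} (hLU : L < U) (hy : y ∈ Set.Icc L U) :
    |(U - y) / (U - L)| ≤ 1 := by
  have hUL : 0 < U - L := sub_pos.2 hLU
  rw [abs_le, le_div_iff₀ hUL, div_le_one hUL]
  constructor <;> linarith [hy.1, hy.2]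

namespace MeasureTheory.pdf

variable {Ω E : Type*} {mΩ : MeasurableSpace Ω} [MeasurableSpace E] {P : Measure Ω}
  {μ : Measure E} {X : Ω → E} {s : Set E}

lemma IsUniform.ae_mem (hs : MeasurableSet s) (hns : μ s ≠ 0) (hnt : μ s ≠ ⊤)
    (hu : IsUniform X s P μ) : ∀ᵐ ω ∂P, X ω ∈ s :=
  ae_of_ae_map (hu.aemeasurable hns hnt) (by rw [hu]; exact ae_cond_mem hs)

lemma IsUniform.integral_comp (hns : μ s ≠ 0) (hnt : μ s ≠ ⊤) (hu : IsUniform X s P μ)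
    {f : E → ℝ} (hf : Measurable f) :
    ∫ ω, f (X ω) ∂P = (μ s)⁻¹.toReal * ∫ x in s, f x ∂μ := by
  rw [← integral_map (hu.aemeasurable hns hnt) hf.aestronglyMeasurable, hu,
    ProbabilityTheory.cond, integral_smul_measure, smul_eq_mul]

lemma IsUniform.integral_comp_Icc {X : Ω → ℝ} {a b : ℝ} (hab : a < b)
    (hu : IsUniform X (Set.Icc a b) P) {f : ℝ → ℝ} (hf : Measurable f) :
    ∫ ω, f (X ω) ∂P = (b - a)⁻¹ * ∫ x in a..b, f x := by
  rw [hu.integral_comp (by simp [hab]) (by simp) hf, Real.volume_Icc, ENNReal.toReal_inv,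
    ENNReal.toReal_ofReal (sub_nonneg.2 hab.le), intervalIntegral.integral_of_le hab.le,
    integral_Icc_eq_integral_Ioc]

lemma isUniform_Icc_of_map_eq {X : Ω → ℝ} {a Δ : ℝ}
    (hX : P.map X = (ENNReal.ofReal Δ)⁻¹ • volume.restrict (Set.Icc a (a + Δ))) :
    IsUniform X (Set.Icc a (a + Δ)) P := by
  rw [IsUniform, hX, ProbabilityTheory.cond, Real.volume_Icc, add_sub_cancel_left]

end MeasureTheory.pdf

lemma intervalIntegrable_of_mapsTo_Icc {f : ℝ → ℝ} (hf : Measurable f) {a b L U : ℝ}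
    (hab : a ≤ b) (hfab : Set.MapsTo f (Set.Icc a b) (Set.Icc L U)) :
    IntervalIntegrable f volume a b :=
  (intervalIntegrable_iff_integrableOn_Icc_of_le hab).2
    (Measure.integrableOn_of_bounded (M := max |L| |U|) (by simp) hf.aestronglyMeasurable
      ((ae_restrict_iff' measurableSet_Icc).2 (.of_forall fun x hx =>
        abs_le_max_abs_abs (hfab hx).1 (hfab hx).2)))

section Independence

variable {Ω : Type*} {mΩ : MeasurableSpace Ω} {μ : Measure Ω}

-- `h` says that `X, Y 0, Y 1, …` are mutually independent.
lemma integral_mul_prod_range_of_iIndepFun {β γ : Type u} [MeasurableSpace β]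
    [MeasurableSpace γ] {X : Ω → β} {Y : ℕ → Ω → γ}
    (h : iIndepFun (m := fun o : Option ℕ => Option.rec (inferInstance : MeasurableSpace β)
        (fun _ => (inferInstance : MeasurableSpace γ)) o)
      (fun o => Option.rec (motive := fun o => Ω → Option.rec β (fun _ => γ) o) X Y o) μ)
    (hX : AEMeasurable X μ) (hY : ∀ k, AEMeasurable (Y k) μ)
    {f : β → ℝ} {g : γ → ℝ} (hf : Measurable f) (hg : Measurable g) (n : ℕ) :
    ∫ ω, f (X ω) * ∏ k ∈ Finset.range n, g (Y k ω) ∂μ =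
      (∫ ω, f (X ω) ∂μ) * ∏ k ∈ Finset.range n, ∫ ω, g (Y k ω) ∂μ := by
  have hfin := h.precomp (Option.map_injective (Fin.val_injective (n := n)))
  have := hfin.integral_fun_prod_comp
    (f := fun o => Option.rec (motive := fun o =>
      Option.rec β (fun _ => γ) (Option.map Fin.val o) → ℝ) f (fun _ => g) o)
    (by rintro (_ | k); exacts [hX, hY k])
    (by rintro (_ | k); exacts [hf.aestronglyMeasurable, hg.aestronglyMeasurable])
  simp only [← Fin.prod_univ_eq_prod_range]
  simp only [Fintype.prod_option] at this
  exact this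

variable {γ : Type} [MeasurableSpace γ] {κ : Ω → ℕ} {Y : ℕ → Ω → γ} {g : γ → ℝ}

lemma integrable_indicator_comp_mul_prod_range [IsFiniteMeasure μ] (hκ : AEMeasurable κ μ)
    (hY : ∀ k, AEMeasurable (Y k) μ) (hg : Measurable g)
    (hg_le : ∀ k, ∀ᵐ ω ∂μ, |g (Y k ω)| ≤ 1) (n : ℕ) :
    Integrable
      (fun ω => ({n} : Set ℕ).indicator 1 (κ ω) * ∏ k ∈ Finset.range n, g (Y k ω)) μ := by
  have := (measurable_of_countable (({n} : Set ℕ).indicator (1 : ℕ → ℝ))).comp_aemeasurable hκ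
  refine Integrable.of_bound (by fun_prop) 1 ?_
  filter_upwards [ae_all_iff.2 hg_le] with ω hω
  rw [Real.norm_eq_abs, abs_mul, Finset.abs_prod]
  refine mul_le_one₀ ?_ (by positivity)
    (Finset.prod_le_one (fun _ _ => abs_nonneg _) fun k _ => hω k)
  rw [Set.indicator_apply]
  split_ifs <;> simp

lemma integral_norm_indicator_comp_mul_prod_range_le
    (h : iIndepFun (m := fun o : Option ℕ => Option.rec (inferInstance : MeasurableSpace ℕ)
        (fun _ => (inferInstance : MeasurableSpace γ)) o)
      (fun o => Option.rec (motive := fun o => Ω → Option.rec ℕ (fun _ => γ) o) κ Y o) μ)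
    (hκ : AEMeasurable κ μ) (hY : ∀ k, AEMeasurable (Y k) μ) (hg : Measurable g)
    (hg_le : ∀ k, ∀ᵐ ω ∂μ, |g (Y k ω)| ≤ 1) (n : ℕ) :
    ∫ ω, ‖({n} : Set ℕ).indicator 1 (κ ω) * ∏ k ∈ Finset.range n, g (Y k ω)‖ ∂μ ≤
      ∫ ω, ({n} : Set ℕ).indicator 1 (κ ω) ∂μ := by
  have := h.isProbabilityMeasure
  have hind_nonneg : ∀ j, 0 ≤ ({n} : Set ℕ).indicator (1 : ℕ → ℝ) j :=
    Set.indicator_nonneg fun _ _ => zero_le_one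
  simp only [Real.norm_eq_abs, abs_mul, Finset.abs_prod, abs_of_nonneg (hind_nonneg _)]
  rw [integral_mul_prod_range_of_iIndepFun h hκ hY (measurable_of_countable _) hg.abs]
  refine mul_le_of_le_one_right (integral_nonneg fun _ => hind_nonneg _)
    (Finset.prod_le_one (fun k _ => integral_nonneg fun _ => abs_nonneg _) fun k _ => ?_)
  calc ∫ ω, |g (Y k ω)| ∂μ ≤ ‖∫ ω, |g (Y k ω)| ∂μ‖ := le_abs_self _
    _ ≤ 1 * μ.real Set.univ := norm_integral_le_of_norm_le_const (by simpa using hg_le k)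
    _ = 1 := by simp

theorem integral_prod_range_of_map_eq_poissonMeasure {r : ℝ≥0}
    (h : iIndepFun (m := fun o : Option ℕ => Option.rec (inferInstance : MeasurableSpace ℕ)
        (fun _ => (inferInstance : MeasurableSpace γ)) o)
      (fun o => Option.rec (motive := fun o => Ω → Option.rec ℕ (fun _ => γ) o) κ Y o) μ)
    (hκ : μ.map κ = poissonMeasure r) (hY : ∀ k, AEMeasurable (Y k) μ) (hg : Measurable g)
    (hg_le : ∀ k, ∀ᵐ ω ∂μ, |g (Y k ω)| ≤ 1) {m : ℝ} (hm : ∀ k, ∫ ω, g (Y k ω) ∂μ = m) :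
    ∫ ω, ∏ k ∈ Finset.range (κ ω), g (Y k ω) ∂μ = exp (r * (m - 1)) := by
  have := h.isProbabilityMeasure
  have hκm : AEMeasurable κ μ :=
    .of_map_ne_zero (by rw [hκ]; exact IsProbabilityMeasure.ne_zero _)
  set F : ℕ → Ω → ℝ := fun n ω =>
    ({n} : Set ℕ).indicator 1 (κ ω) * ∏ k ∈ Finset.range n, g (Y k ω)
  have hprob : ∀ n, ∫ ω, ({n} : Set ℕ).indicator 1 (κ ω) ∂μ = (poissonMeasure r).real {n} :=
    fun n => by
      rw [← integral_map hκm (measurable_of_countable _).aestronglyMeasurable, hκ,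
        integral_indicator_one (measurableSet_singleton n)]
  have hF_integral : ∀ n, ∫ ω, F n ω ∂μ = (poissonMeasure r).real {n} * m ^ n := fun n => by
    rw [integral_mul_prod_range_of_iIndepFun h hκm hY (measurable_of_countable _) hg, hprob]
    simp [hm]
  have hF_summable : Summable fun n => ∫ ω, ‖F n ω‖ ∂μ := by
    refine Summable.of_nonneg_of_le (fun n => integral_nonneg fun _ => norm_nonneg _)
      (fun n => (integral_norm_indicator_comp_mul_prod_range_le h hκm hY hg hg_le n).trans_eq
        (hprob n)) ?_
    simpa using (hasSum_poissonMeasure_real_mul_pow r 1).summable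
  have hF_tsum : ∀ ω, ∑' n, F n ω = ∏ k ∈ Finset.range (κ ω), g (Y k ω) := fun ω => by
    rw [tsum_eq_single (κ ω) fun n hn => by simp [F, Ne.symm hn]]
    simp [F]
  have hsum : HasSum (fun n => ∫ ω, F n ω ∂μ) (∫ ω, ∑' n, F n ω ∂μ) :=
    hasSum_integral_of_summable_integral_norm
      (integrable_indicator_comp_mul_prod_range hκm hY hg hg_le) hF_summable
  simp only [hF_integral, hF_tsum] at hsum
  exact hsum.unique (hasSum_poissonMeasure_real_mul_pow r m)

end Independence

theorem poisson_estimator_unbiased_general {Ω : Type*} [MeasureSpace Ω]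
    (t0 Δ L U : ℝ) (hΔ : 0 < Δ) (hLU : L < U)
    (φ : ℝ → ℝ) (hφmeas : Measurable φ)
    (hφ : ∀ x ∈ Set.Icc t0 (t0 + Δ), φ x ∈ Set.Icc L U)
    (κ : Ω → ℕ) (χ : ℕ → Ω → ℝ)
    (hindep : iIndepFun
      (m := fun o : Option ℕ =>
        Option.rec (inferInstance : MeasurableSpace ℕ)
          (fun _ => (inferInstance : MeasurableSpace ℝ)) o)
      (fun o => Option.rec
        (motive := fun o => Ω → Option.rec ℕ (fun _ => ℝ) o) κ (fun k => χ k) o) ℙ)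
    (hκ : Measure.map κ ℙ = poissonMeasure (Real.toNNReal (Δ * (U - L))))
    (hχ : ∀ k, Measure.map (χ k) ℙ =
      (ENNReal.ofReal Δ)⁻¹ • volume.restrict (Set.Icc t0 (t0 + Δ))) :
    ∫ ω, Real.exp (-L * Δ) / (U - L) ^ (κ ω) *
        ∏ k ∈ Finset.range (κ ω), (U - φ (χ k ω)) ∂ℙ =
      Real.exp (-∫ t in t0..(t0 + Δ), φ t) := by
  set I := ∫ t in t0..(t0 + Δ), φ t
  set g : ℝ → ℝ := fun x => (U - φ x) / (U - L)
  have hg : Measurable g := (hφmeas.const_sub U).div_const _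
  have hns : volume (Set.Icc t0 (t0 + Δ)) ≠ 0 := by simp [hΔ]
  have hnt : volume (Set.Icc t0 (t0 + Δ)) ≠ ⊤ := by simp
  have hu := fun k => pdf.isUniform_Icc_of_map_eq (hχ k)
  have hg_le : ∀ k, ∀ᵐ ω ∂ℙ, |g (χ k ω)| ≤ 1 := fun k =>
    ((hu k).ae_mem measurableSet_Icc hns hnt).mono fun ω hω => abs_sub_div_sub_le_one hLU (hφ _ hω)
  have hmean : ∀ k, ∫ ω, g (χ k ω) ∂ℙ = Δ⁻¹ * ((Δ * U - I) / (U - L)) := fun k => by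
    rw [(hu k).integral_comp_Icc (by linarith) hg, add_sub_cancel_left,
      intervalIntegral.integral_div, intervalIntegral.integral_sub intervalIntegrable_const
        (intervalIntegrable_of_mapsTo_Icc hφmeas (by linarith) hφ),
      intervalIntegral.integral_const, add_sub_cancel_left, smul_eq_mul]
  have hprod := integral_prod_range_of_map_eq_poissonMeasure hindep hκ
    (fun k => (hu k).aemeasurable hns hnt) hg hg_le hmean
  calc ∫ ω, exp (-L * Δ) / (U - L) ^ (κ ω) * ∏ k ∈ Finset.range (κ ω), (U - φ (χ k ω)) ∂ℙ
      = ∫ ω, exp (-L * Δ) * ∏ k ∈ Finset.range (κ ω), g (χ k ω) ∂ℙ := by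
        congr 1 with ω
        rw [Finset.prod_div_distrib, Finset.prod_const, Finset.card_range]
        ring
    _ = exp (-I) := by
        have hUL : U - L ≠ 0 := (sub_pos.2 hLU).ne'
        rw [integral_const_mul, hprod, ← exp_add, Real.coe_toNNReal _ (by nlinarith)]
        congr 1
        field_simp
        ring

/-- Unbiasedness of the Poisson estimator (UE-a):
with `κ ~ Poisson(Δ(U−L))` and `χ_k` i.i.d. uniform on `[t₀, t₀+Δ]`, all
independent, and `φ : [t₀,t₀+Δ] → [L,U]` measurable,
`E[e^{−LΔ}(U−L)^{−κ} ∏_{k<κ}(U−φ(χ_k))] = exp(−∫_{t₀}^{t₀+Δ} φ)`. -/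
theorem poisson_estimator_unbiased {Ω : Type*} [MeasureSpace Ω]
    [IsProbabilityMeasure (ℙ : Measure Ω)]
    (t0 Δ L U : ℝ) (hΔ : 0 < Δ) (hLU : L < U)
    (φ : ℝ → ℝ) (hφmeas : Measurable φ)
    (hφ : ∀ x ∈ Set.Icc t0 (t0 + Δ), φ x ∈ Set.Icc L U)
    (κ : Ω → ℕ) (χ : ℕ → Ω → ℝ)
    (hindep : iIndepFun
      (m := fun o : Option ℕ =>
        Option.rec (inferInstance : MeasurableSpace ℕ)
          (fun _ => (inferInstance : MeasurableSpace ℝ)) o)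
      (fun o => Option.rec
        (motive := fun o => Ω → Option.rec ℕ (fun _ => ℝ) o) κ (fun k => χ k) o) ℙ)
    (hκ : Measure.map κ ℙ = poissonMeasure (Real.toNNReal (Δ * (U - L))))
    (hχ : ∀ k, Measure.map (χ k) ℙ =
      (ENNReal.ofReal Δ)⁻¹ • volume.restrict (Set.Icc t0 (t0 + Δ))) :
    ∫ ω, Real.exp (-L * Δ) / (U - L) ^ (κ ω) *
        ∏ k ∈ Finset.range (κ ω), (U - φ (χ k ω)) ∂ℙ =
      Real.exp (-∫ t in t0..(t0 + Δ), φ t) :=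
  poisson_estimator_unbiased_general t0 Δ L U hΔ hLU φ hφmeas hφ κ χ hindep hκ hχ
end

section
/- Let κ be a nonnegative-integer-valued random variable with probability mass function p(k), k ≥ 0, with p(k) > 0 whenever f_k > 0. Let Δ > 0, U real, φ : [t₀, t₀+Δ] → ℝ measurable with φ ≤ U, and χ_1, χ_2, … i.i.d. Uniform[t₀, t₀+Δ] independent of κ. Define ρ̂ = (Δ^κ e^{−UΔ} / (κ! p(κ))) ∏_{k=1}^{κ}(U − φ(χ_k)). Then E[ρ̂] = exp( −∫_{t₀}^{t₀+Δ} φ(t) dt ), provided ∫_{t₀}^{t₀+Δ}(U−φ) dt < ∞ and the relevant series converges absolutely. -/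
open MeasureTheory ProbabilityTheory Real

/-!
On the event `κ = k`, independence gives
`E[ρ̂; κ = k] = Δ^k e^{-UΔ} / (k! p(k)) · p(k) · (Δ⁻¹ ∫(U - φ))^k = e^{-UΔ} (∫(U - φ))^k / k!`,
the importance weight `p(k)` cancelling. Summing over `k` (integrability of `ρ̂` justifies the
decomposition of `E[ρ̂]`) gives `e^{-UΔ} exp(∫(U - φ)) = exp(-∫φ)`.
-/

section

universe u

variable {Ω ι : Type*} {β γ : Type u} {mΩ : MeasurableSpace Ω} {μ : Measure Ω}
  {mβ : MeasurableSpace β} {mγ : MeasurableSpace γ} {κ : Ω → β} {χ : ι → Ω → γ}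

theorem setIntegral_preimage_prod_comp_of_iIndepFun
    (hindep : iIndepFun (m := fun o : Option ι => Option.rec mβ (fun _ => mγ) o)
      (fun o => Option.rec (motive := fun o => Ω → Option.rec β (fun _ => γ) o) κ χ o) μ)
    (hκ : Measurable κ) (hχ : ∀ i, Measurable (χ i)) {B : Set β} (hB : MeasurableSet B)
    {g : γ → ℝ} (hg : Measurable g) (s : Finset ι) :
    ∫ ω in κ ⁻¹' B, ∏ i ∈ s, g (χ i ω) ∂μ = μ.real (κ ⁻¹' B) * ∏ i ∈ s, ∫ ω, g (χ i ω) ∂μ := by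
  have hs := hindep.precomp (g := Option.map ((↑) : s → ι))
    (Option.map_injective Subtype.val_injective)
  have key := hs.integral_fun_prod_comp
    (f := fun o => Option.rec
      (motive := fun o => Option.rec β (fun _ => γ) (Option.map ((↑) : s → ι) o) → ℝ)
      (B.indicator 1) (fun _ => g) o)
    (by rintro (_ | i); exacts [hκ.aemeasurable, (hχ i).aemeasurable])
    (by rintro (_ | i)
        exacts [(measurable_one.indicator hB).aestronglyMeasurable, hg.aestronglyMeasurable])
  simp only [Fintype.prod_option] at key
  calc ∫ ω in κ ⁻¹' B, ∏ i ∈ s, g (χ i ω) ∂μ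
      = ∫ ω, (κ ⁻¹' B).indicator 1 ω * ∏ i : s, g (χ i ω) ∂μ := by
        rw [← integral_indicator (hκ hB)]
        congr with ω
        by_cases hω : ω ∈ κ ⁻¹' B <;> simp [hω, ← s.prod_coe_sort fun i => g (χ i ω)]
    _ = (∫ ω, (κ ⁻¹' B).indicator 1 ω ∂μ) * ∏ i : s, ∫ ω, g (χ i ω) ∂μ := key
    _ = μ.real (κ ⁻¹' B) * ∏ i ∈ s, ∫ ω, g (χ i ω) ∂μ := by
        rw [integral_indicator_one (hκ hB), s.prod_coe_sort fun i => ∫ ω, g (χ i ω) ∂μ]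

theorem hasSum_setIntegral_preimage_singleton [Countable β] [MeasurableSingletonClass β]
    (hκ : Measurable κ) {f : Ω → ℝ} (hf : Integrable f μ) :
    HasSum (fun b => ∫ ω in κ ⁻¹' {b}, f ω ∂μ) (∫ ω, f ω ∂μ) := by
  have hcover : (⋃ b, κ ⁻¹' {b}) = Set.univ := by
    rw [← Set.preimage_iUnion, Set.iUnion_of_singleton, Set.preimage_univ]
  simpa [hcover] using hasSum_integral_iUnion (fun b => hκ (measurableSet_singleton b))
    (pairwise_disjoint_fiber κ) (by rwa [hcover, integrableOn_univ])

theorem integral_comp_eq_of_map_eq_uniform {X : Ω → ℝ} (hX : Measurable X) {a Δ : ℝ} (hΔ : 0 ≤ Δ)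
    (hmap : μ.map X = (ENNReal.ofReal Δ)⁻¹ • volume.restrict (Set.Icc a (a + Δ)))
    {g : ℝ → ℝ} (hg : Measurable g) :
    ∫ ω, g (X ω) ∂μ = Δ⁻¹ * ∫ x in a..(a + Δ), g x := by
  rw [← integral_map hX.aemeasurable hg.aestronglyMeasurable, hmap, integral_smul_measure,
    ENNReal.toReal_inv, ENNReal.toReal_ofReal hΔ, smul_eq_mul,
    intervalIntegral.integral_of_le (by linarith), integral_Icc_eq_integral_Ioc]

end

theorem general_estimator_unbiased_general {Ω : Type*} [MeasureSpace Ω]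
    [IsProbabilityMeasure (ℙ : Measure Ω)]
    (t0 Δ U : ℝ) (hΔ : 0 < Δ)
    (φ : ℝ → ℝ) (hφmeas : Measurable φ)
    (hφint : IntervalIntegrable φ volume t0 (t0 + Δ))
    (p : ℕ → ℝ) (hp : ∀ k, 0 < p k)
    (κ : Ω → ℕ) (χ : ℕ → Ω → ℝ)
    (hκmeas : Measurable κ) (hχmeas : ∀ k, Measurable (χ k))
    (hindep : iIndepFun (m :=
      (fun o : Option ℕ =>
        Option.rec (inferInstance : MeasurableSpace ℕ)
          (fun _ => (inferInstance : MeasurableSpace ℝ)) o))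
      (fun o => Option.rec
        (motive := fun o => Ω → Option.rec ℕ (fun _ => ℝ) o) κ (fun k => χ k) o) ℙ)
    (hκ : ∀ k, ℙ {ω | κ ω = k} = ENNReal.ofReal (p k))
    (hχ : ∀ k, Measure.map (χ k) ℙ =
      (ENNReal.ofReal Δ)⁻¹ • volume.restrict (Set.Icc t0 (t0 + Δ)))
    (ρhat : Ω → ℝ)
    (hρ : ∀ ω, ρhat ω = Δ ^ (κ ω) * Real.exp (-U * Δ) /
        ((Nat.factorial (κ ω) : ℝ) * p (κ ω)) *
      ∏ k ∈ Finset.range (κ ω), (U - φ (χ k ω)))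
    (hρint : Integrable ρhat ℙ) :
    ∫ ω, ρhat ω ∂ℙ = Real.exp (-∫ t in t0..(t0 + Δ), φ t) := by
  have hg : Measurable fun x => U - φ x := measurable_const.sub hφmeas
  set I := ∫ x in t0..(t0 + Δ), (U - φ x) with hI
  have hterm : ∀ k, ∫ ω in κ ⁻¹' {k}, ρhat ω ∂ℙ = exp (-U * Δ) * (I ^ k / k.factorial) := by
    intro k
    have hk : MeasurableSet (κ ⁻¹' {k}) := hκmeas (measurableSet_singleton k)
    calc ∫ ω in κ ⁻¹' {k}, ρhat ω ∂ℙ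
        = ∫ ω in κ ⁻¹' {k}, Δ ^ k * exp (-U * Δ) / (k.factorial * p k) *
            ∏ i ∈ Finset.range k, (U - φ (χ i ω)) ∂ℙ :=
          setIntegral_congr_fun hk fun ω (hω : κ ω = k) => by rw [hρ, hω]
      _ = Δ ^ k * exp (-U * Δ) / (k.factorial * p k) * (p k * (Δ⁻¹ * I) ^ k) := by
          rw [integral_const_mul, setIntegral_preimage_prod_comp_of_iIndepFun hindep hκmeas hχmeas
            (measurableSet_singleton k) hg, measureReal_def, show ℙ (κ ⁻¹' {k}) = _ from hκ k,
            ENNReal.toReal_ofReal (hp k).le]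
          simp_rw [integral_comp_eq_of_map_eq_uniform (hχmeas _) hΔ.le (hχ _) hg,
            Finset.prod_const, Finset.card_range, ← hI]
      _ = exp (-U * Δ) * (I ^ k / k.factorial) := by
          rw [mul_pow, inv_pow]
          field_simp [hΔ.ne', (hp k).ne']
  have hseries : HasSum (fun k : ℕ => exp (-U * Δ) * (I ^ k / k.factorial))
      (exp (-U * Δ) * exp I) := by
    rw [exp_eq_exp_ℝ]
    exact (NormedSpace.expSeries_div_hasSum_exp I).mul_left _
  have hdecomp := (hasSum_setIntegral_preimage_singleton hκmeas hρint).congr_fun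
    fun k => (hterm k).symm
  rw [hdecomp.unique hseries, ← exp_add, hI,
    intervalIntegral.integral_sub intervalIntegrable_const hφint, intervalIntegral.integral_const,
    add_sub_cancel_left, smul_eq_mul]
  ring_nf

/-- Unbiasedness of the generalized Poisson-type estimator with an arbitrary
(everywhere positive) importance distribution `p` on `ℕ`:
`E[(Δ^κ e^{−UΔ}/(κ! p(κ))) ∏_{k<κ}(U−φ(χ_k))] = exp(−∫_{t₀}^{t₀+Δ} φ)`,
provided `φ ≤ U` is integrable on the interval and the estimator is
integrable. -/
theorem general_estimator_unbiased {Ω : Type*} [MeasureSpace Ω]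
    [IsProbabilityMeasure (ℙ : Measure Ω)]
    (t0 Δ U : ℝ) (hΔ : 0 < Δ)
    (φ : ℝ → ℝ) (hφmeas : Measurable φ)
    (hφU : ∀ x ∈ Set.Icc t0 (t0 + Δ), φ x ≤ U)
    (hφint : IntervalIntegrable φ volume t0 (t0 + Δ))
    (p : ℕ → ℝ) (hp : ∀ k, 0 < p k)
    (κ : Ω → ℕ) (χ : ℕ → Ω → ℝ)
    (hκmeas : Measurable κ) (hχmeas : ∀ k, Measurable (χ k))
    (hindep : iIndepFun (m :=
      (fun o : Option ℕ =>
        Option.rec (inferInstance : MeasurableSpace ℕ)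
          (fun _ => (inferInstance : MeasurableSpace ℝ)) o))
      (fun o => Option.rec
        (motive := fun o => Ω → Option.rec ℕ (fun _ => ℝ) o) κ (fun k => χ k) o) ℙ)
    (hκ : ∀ k, ℙ {ω | κ ω = k} = ENNReal.ofReal (p k))
    (hχ : ∀ k, Measure.map (χ k) ℙ =
      (ENNReal.ofReal Δ)⁻¹ • volume.restrict (Set.Icc t0 (t0 + Δ)))
    (ρhat : Ω → ℝ)
    (hρ : ∀ ω, ρhat ω = Δ ^ (κ ω) * Real.exp (-U * Δ) /
        ((Nat.factorial (κ ω) : ℝ) * p (κ ω)) *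
      ∏ k ∈ Finset.range (κ ω), (U - φ (χ k ω)))
    (hρint : Integrable ρhat ℙ) :
    ∫ ω, ρhat ω ∂ℙ = Real.exp (-∫ t in t0..(t0 + Δ), φ t) :=
  general_estimator_unbiased_general t0 Δ U hΔ φ hφmeas hφint p hp κ χ hκmeas hχmeas hindep hκ hχ
    ρhat hρ hρint
end

section
/- With κ ~ Poisson(λ), λ = [Δ ∫_{t₀}^{t₀+Δ}(U−φ(t))² dt]^{1/2}, U an upper bound for φ and Φ a lower bound (inf φ ≥ Φ > −∞), the second moment of the estimator ρ̂ = (Δ^κ e^{−(U−Φ)Δ}/(κ! p(κ))) ∏_{k=1}^κ (U−φ(χ_k)) satisfies E[ρ̂²] = exp(2(λ − (U−Φ)Δ)) ≤ 1, using that λ ≤ (U−Φ)Δ. -/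
/-! Since `κ! p(κ) = λ^κ e^{-λ}`, the estimator factors as
`ρ̂ = e^{λ-(U-Φ)Δ} ∏_{k<κ} (Δ/λ)(U - φ(χ_k))`. Because `λ² = Δ ∫ (U-φ)²` and `χ_k` is uniform,
every squared factor `(Δ/λ)² (U - φ(χ_k))²` has mean `1`; by independence of `κ` and the `χ_k`,
splitting along the events `κ = m` gives `E ∏_{k<κ} (…)² = ∑ₘ P(κ = m) = 1`.
Finally `(U - φ)² ≤ (U - Φ)²` gives `λ ≤ (U - Φ)Δ`, hence `exp(2(λ - (U-Φ)Δ)) ≤ 1`. -/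

open MeasureTheory ProbabilityTheory Real Finset
open scoped ENNReal

section RandomProduct

variable {Ω : Type*} {β : Type} [MeasurableSpace Ω] [MeasurableSpace β] {μ : Measure Ω}
  {κ : Ω → ℕ} {X : ℕ → Ω → β}

abbrev countSampleMeasurableSpace (β : Type) [MeasurableSpace β] (o : Option ℕ) :
    MeasurableSpace (Option.rec ℕ (fun _ => β) o) :=
  Option.rec (inferInstance : MeasurableSpace ℕ) (fun _ => (inferInstance : MeasurableSpace β)) o

def countSample (κ : Ω → ℕ) (X : ℕ → Ω → β) (o : Option ℕ) : Ω → Option.rec ℕ (fun _ => β) o :=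
  Option.rec (motive := fun o => Ω → Option.rec ℕ (fun _ => β) o) κ X o

theorem setLIntegral_preimage_singleton_prod_range_of_iIndepFun (hκ : Measurable κ)
    (hX : ∀ k, Measurable (X k))
    (hindep : iIndepFun (m := countSampleMeasurableSpace β) (countSample κ X) μ)
    {F : β → ℝ≥0∞} (hF : Measurable F) (m : ℕ) :
    ∫⁻ ω in κ ⁻¹' {m}, ∏ k ∈ range m, F (X k ω) ∂μ =
      μ (κ ⁻¹' {m}) * ∏ k ∈ range m, ∫⁻ ω, F (X k ω) ∂μ := by
  let G : (o : Option ℕ) → Option.rec ℕ (fun _ => β) o → ℝ≥0∞ :=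
    fun o => Option.rec (motive := fun o => Option.rec ℕ (fun _ => β) o → ℝ≥0∞)
      (({m} : Set ℕ).indicator 1) (fun _ => F) o
  have := lintegral_prod_eq_prod_lintegral_of_indepFun (insertNone (range m)) _
    (hindep.comp G fun o => by
      rcases o with _ | k
      exacts [measurable_of_countable _, hF]) fun o => by
      rcases o with _ | k
      exacts [(measurable_of_countable _).comp hκ, hF.comp (hX k)]
  have hm : MeasurableSet (κ ⁻¹' {m}) := hκ (measurableSet_singleton m)
  simp only [prod_insertNone, G, countSample, Function.comp_def] at this
  have hind : ∀ ω, ({m} : Set ℕ).indicator 1 (κ ω) = (κ ⁻¹' {m}).indicator (1 : Ω → ℝ≥0∞) ω :=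
    fun ω => rfl
  simp only [hind, lintegral_indicator_one hm] at this
  rw [← this, ← lintegral_indicator hm]
  congr 1 with ω
  by_cases h : ω ∈ κ ⁻¹' {m} <;> simp [h]

theorem lintegral_prod_range_eq_tsum_of_iIndepFun (hκ : Measurable κ)
    (hX : ∀ k, Measurable (X k))
    (hindep : iIndepFun (m := countSampleMeasurableSpace β) (countSample κ X) μ)
    {F : β → ℝ≥0∞} (hF : Measurable F) :
    ∫⁻ ω, ∏ k ∈ range (κ ω), F (X k ω) ∂μ =
      ∑' m, μ (κ ⁻¹' {m}) * ∏ k ∈ range m, ∫⁻ ω, F (X k ω) ∂μ := by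
  have hfibers : (⋃ m, κ ⁻¹' {m}) = Set.univ := by
    rw [← Set.preimage_iUnion, Set.iUnion_of_singleton, Set.preimage_univ]
  rw [← setLIntegral_univ, ← hfibers, lintegral_iUnion (fun m => hκ (measurableSet_singleton m))
    (pairwise_disjoint_fiber κ)]
  refine tsum_congr fun m => ?_
  rw [← setLIntegral_preimage_singleton_prod_range_of_iIndepFun hκ hX hindep hF m]
  refine setLIntegral_congr_fun (hκ (measurableSet_singleton m)) fun ω hω => ?_
  rw [show κ ω = m from hω]

theorem integral_prod_range_eq_one_of_iIndepFun [IsProbabilityMeasure μ] (hκ : Measurable κ)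
    (hX : ∀ k, Measurable (X k))
    (hindep : iIndepFun (m := countSampleMeasurableSpace β) (countSample κ X) μ)
    {f : β → ℝ} (hf : Measurable f) (hf₀ : 0 ≤ f)
    (hint : ∀ k, Integrable (fun ω => f (X k ω)) μ) (hmean : ∀ k, ∫ ω, f (X k ω) ∂μ = 1) :
    ∫ ω, ∏ k ∈ range (κ ω), f (X k ω) ∂μ = 1 := by
  have hmean' : ∀ k, ∫⁻ ω, ENNReal.ofReal (f (X k ω)) ∂μ = 1 := fun k => by
    rw [← ofReal_integral_eq_lintegral_ofReal (hint k) (.of_forall fun ω => hf₀ _), hmean k,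
      ENNReal.ofReal_one]
  have hlintegral : ∫⁻ ω, ∏ k ∈ range (κ ω), ENNReal.ofReal (f (X k ω)) ∂μ = 1 := by
    rw [lintegral_prod_range_eq_tsum_of_iIndepFun hκ hX hindep hf.ennreal_ofReal]
    simp only [hmean', prod_const_one, mul_one]
    rw [← tsum_univ, tsum_measure_preimage_singleton Set.countable_univ
      fun m _ => hκ (measurableSet_singleton m), Set.preimage_univ, measure_univ]
  have hmeas : Measurable fun ω => ∏ k ∈ range (κ ω), f (X k ω) :=
    (measurable_from_prod_countable_left (f := fun p : Ω × ℕ => ∏ k ∈ range p.2, f (X k p.1))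
      fun n => Finset.measurable_prod (range n) fun k _ => hf.comp (hX k)).comp
      (measurable_id.prodMk hκ)
  rw [integral_eq_lintegral_of_nonneg_ae (.of_forall fun ω => prod_nonneg fun k _ => hf₀ _)
    hmeas.aestronglyMeasurable]
  simp_rw [ENNReal.ofReal_prod_of_nonneg fun k _ => hf₀ _]
  rw [hlintegral, ENNReal.toReal_one]

end RandomProduct

theorem sq_poisson_weighted_prod_eq {Δ a lam : ℝ} (hlam : lam ≠ 0) (n : ℕ) (y : ℕ → ℝ) :
    (Δ ^ n * exp (-a * Δ) / ((n.factorial : ℝ) * (lam ^ n * exp (-lam) / n.factorial)) *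
      ∏ k ∈ range n, y k) ^ 2 =
      exp (2 * (lam - a * Δ)) * ∏ k ∈ range n, ((Δ / lam) ^ 2 * y k ^ 2) := by
  have hfact : (n.factorial : ℝ) ≠ 0 := Nat.cast_ne_zero.2 n.factorial_ne_zero
  rw [mul_div_cancel₀ _ hfact, prod_mul_distrib, prod_const, card_range, prod_pow,
    show 2 * (lam - a * Δ) = lam + lam + (-a * Δ + -a * Δ) by ring, exp_add, exp_add, exp_add,
    exp_neg lam, div_pow, div_pow, ← pow_mul]
  field_simp
  ring

section UniformSample

variable {Ω : Type*} [MeasurableSpace Ω] {μ : Measure Ω} {χ : Ω → ℝ} {a Δ : ℝ}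

theorem integrable_comp_of_map_eq_uniform (hχ : Measurable χ) (hΔ : 0 < Δ)
    (hmap : μ.map χ = (ENNReal.ofReal Δ)⁻¹ • volume.restrict (Set.Icc a (a + Δ)))
    {f : ℝ → ℝ} (hf : IntegrableOn f (Set.Icc a (a + Δ))) :
    Integrable (fun ω => f (χ ω)) μ := by
  have hf' : Integrable f (μ.map χ) := by
    rw [hmap]
    exact hf.smul_measure (ENNReal.inv_ne_top.2 (ENNReal.ofReal_pos.2 hΔ).ne')
  exact hf'.comp_measurable hχ

theorem integral_comp_of_map_eq_uniform (hχ : Measurable χ) (hΔ : 0 ≤ Δ)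
    (hmap : μ.map χ = (ENNReal.ofReal Δ)⁻¹ • volume.restrict (Set.Icc a (a + Δ)))
    {f : ℝ → ℝ} (hf : Measurable f) :
    ∫ ω, f (χ ω) ∂μ = (∫ t in a..a + Δ, f t) / Δ := by
  rw [← integral_map hχ.aemeasurable hf.aestronglyMeasurable, hmap, integral_smul_measure,
    integral_Icc_eq_integral_Ioc, ← intervalIntegral.integral_of_le (by linarith),
    ENNReal.toReal_inv, ENNReal.toReal_ofReal hΔ, smul_eq_mul, inv_mul_eq_div]

end UniformSample

section BoundedIntegrand

variable {f : ℝ → ℝ} {Φ U : ℝ}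

theorem sq_sub_le_sq_sub_of_mem_Icc {x : ℝ} (hx : x ∈ Set.Icc Φ U) : (U - x) ^ 2 ≤ (U - Φ) ^ 2 :=
  pow_le_pow_left₀ (sub_nonneg.2 hx.2) (by linarith [hx.1]) 2

theorem integrableOn_sq_sub_of_mem_Icc {a b : ℝ} (hf : Measurable f)
    (hfab : ∀ t ∈ Set.Icc a b, f t ∈ Set.Icc Φ U) :
    IntegrableOn (fun t => (U - f t) ^ 2) (Set.Icc a b) := by
  refine Measure.integrableOn_of_bounded measure_Icc_lt_top.ne (by fun_prop) (M := (U - Φ) ^ 2) ?_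
  filter_upwards [ae_restrict_mem measurableSet_Icc] with t ht
  rw [Real.norm_of_nonneg (sq_nonneg _)]
  exact sq_sub_le_sq_sub_of_mem_Icc (hfab t ht)

theorem integral_sq_sub_le_of_mem_Icc {a Δ : ℝ} (hΔ : 0 ≤ Δ)
    (hf : ∀ t ∈ Set.Icc a (a + Δ), f t ∈ Set.Icc Φ U) :
    ∫ t in a..a + Δ, (U - f t) ^ 2 ≤ Δ * (U - Φ) ^ 2 := by
  have hbound := intervalIntegral.norm_integral_le_of_norm_le_const (C := (U - Φ) ^ 2)
    (f := fun t => (U - f t) ^ 2) (a := a) (b := a + Δ) fun t ht => by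
      rw [Set.uIoc_of_le (by linarith)] at ht
      rw [Real.norm_of_nonneg (sq_nonneg _)]
      exact sq_sub_le_sq_sub_of_mem_Icc (hf t (Set.Ioc_subset_Icc_self ht))
  rw [add_sub_cancel_left, abs_of_nonneg hΔ, Real.norm_eq_abs, mul_comm] at hbound
  exact (le_abs_self _).trans hbound

theorem sqrt_mul_integral_sq_sub_le {a Δ : ℝ} (hΔ : 0 ≤ Δ) (hΦU : Φ ≤ U)
    (hf : ∀ t ∈ Set.Icc a (a + Δ), f t ∈ Set.Icc Φ U) :
    √(Δ * ∫ t in a..a + Δ, (U - f t) ^ 2) ≤ (U - Φ) * Δ := by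
  rw [Real.sqrt_le_iff]
  refine ⟨mul_nonneg (sub_nonneg.2 hΦU) hΔ, ?_⟩
  calc Δ * ∫ t in a..a + Δ, (U - f t) ^ 2 ≤ Δ * (Δ * (U - Φ) ^ 2) :=
        mul_le_mul_of_nonneg_left (integral_sq_sub_le_of_mem_Icc hΔ hf) hΔ
    _ = ((U - Φ) * Δ) ^ 2 := by ring

end BoundedIntegrand

theorem optimal_estimator_second_moment_general {Ω : Type*} [MeasureSpace Ω]
    [IsProbabilityMeasure (ℙ : Measure Ω)]
    (t0 Δ U Φ lam : ℝ) (hΔ : 0 < Δ) (hΦU : Φ < U)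
    (φ : ℝ → ℝ) (hφmeas : Measurable φ)
    (hφ : ∀ x ∈ Set.Icc t0 (t0 + Δ), φ x ∈ Set.Icc Φ U)
    (hlam : lam = Real.sqrt (Δ * ∫ t in t0..(t0 + Δ), (U - φ t) ^ 2))
    (hlampos : 0 < lam)
    (κ : Ω → ℕ) (χ : ℕ → Ω → ℝ)
    (hκmeas : Measurable κ) (hχmeas : ∀ k, Measurable (χ k))
    (hindep : iIndepFun
      (m := fun o : Option ℕ =>
        Option.rec (inferInstance : MeasurableSpace ℕ)
          (fun _ => (inferInstance : MeasurableSpace ℝ)) o)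
      (fun o => Option.rec
        (motive := fun o => Ω → Option.rec ℕ (fun _ => ℝ) o) κ (fun k => χ k) o) ℙ)
    (hχ : ∀ k, Measure.map (χ k) ℙ =
      (ENNReal.ofReal Δ)⁻¹ • volume.restrict (Set.Icc t0 (t0 + Δ)))
    (ρhat : Ω → ℝ)
    (hρ : ∀ ω, ρhat ω = Δ ^ (κ ω) * Real.exp (-(U - Φ) * Δ) /
        ((Nat.factorial (κ ω) : ℝ) *
          (lam ^ (κ ω) * Real.exp (-lam) / (Nat.factorial (κ ω) : ℝ))) *
      ∏ k ∈ Finset.range (κ ω), (U - φ (χ k ω))) :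
    ∫ ω, (ρhat ω) ^ 2 ∂ℙ = Real.exp (2 * (lam - (U - Φ) * Δ)) ∧
    Real.exp (2 * (lam - (U - Φ) * Δ)) ≤ 1 := by
  set g : ℝ → ℝ := fun t => (Δ / lam) ^ 2 * (U - φ t) ^ 2
  have hlam_sq : lam ^ 2 = Δ * ∫ t in t0..t0 + Δ, (U - φ t) ^ 2 := by
    rw [hlam, sq_sqrt (mul_nonneg hΔ.le (intervalIntegral.integral_nonneg (by linarith)
      fun t _ => sq_nonneg _))]
  have hmean : ∀ k, ∫ ω, g (χ k ω) ∂ℙ = 1 := fun k => by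
    rw [integral_comp_of_map_eq_uniform (hχmeas k) hΔ.le (hχ k) (by fun_prop),
      intervalIntegral.integral_const_mul]
    field_simp
    exact hlam_sq.symm
  have hint : ∀ k, Integrable (fun ω => g (χ k ω)) ℙ := fun k =>
    integrable_comp_of_map_eq_uniform (hχmeas k) hΔ (hχ k)
      ((integrableOn_sq_sub_of_mem_Icc hφmeas hφ).const_mul _)
  have hprod := integral_prod_range_eq_one_of_iIndepFun hκmeas hχmeas hindep (by fun_prop)
    (fun t => by positivity) hint hmean
  refine ⟨?_, exp_le_one_iff.2 ?_⟩
  · simp_rw [hρ, sq_poisson_weighted_prod_eq hlampos.ne']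
    rw [integral_const_mul, hprod, mul_one]
  · linarith [hlam ▸ sqrt_mul_integral_sq_sub_le hΔ.le hΦU.le hφ]

/-- Second moment of the optimally-tuned Poisson estimator: with
`κ ~ Poisson(λ)`, `λ = (Δ∫(U−φ)²)^{1/2}`, `Φ ≤ φ ≤ U`, the estimator
`ρ̂ = (Δ^κ e^{−(U−Φ)Δ}/(κ! p(κ)))∏_{k<κ}(U−φ(χ_k))` (with
`p(k) = λ^k e^{−λ}/k!`) satisfies `E[ρ̂²] = exp(2(λ−(U−Φ)Δ)) ≤ 1`. -/
theorem optimal_estimator_second_moment {Ω : Type*} [MeasureSpace Ω]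
    [IsProbabilityMeasure (ℙ : Measure Ω)]
    (t0 Δ U Φ lam : ℝ) (hΔ : 0 < Δ) (hΦU : Φ < U)
    (φ : ℝ → ℝ) (hφmeas : Measurable φ)
    (hφ : ∀ x ∈ Set.Icc t0 (t0 + Δ), φ x ∈ Set.Icc Φ U)
    (hlam : lam = Real.sqrt (Δ * ∫ t in t0..(t0 + Δ), (U - φ t) ^ 2))
    (hlampos : 0 < lam)
    (κ : Ω → ℕ) (χ : ℕ → Ω → ℝ)
    (hκmeas : Measurable κ) (hχmeas : ∀ k, Measurable (χ k))
    (hindep : iIndepFun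
      (m := fun o : Option ℕ =>
        Option.rec (inferInstance : MeasurableSpace ℕ)
          (fun _ => (inferInstance : MeasurableSpace ℝ)) o)
      (fun o => Option.rec
        (motive := fun o => Ω → Option.rec ℕ (fun _ => ℝ) o) κ (fun k => χ k) o) ℙ)
    (hκ : Measure.map κ ℙ = poissonMeasure (Real.toNNReal lam))
    (hχ : ∀ k, Measure.map (χ k) ℙ =
      (ENNReal.ofReal Δ)⁻¹ • volume.restrict (Set.Icc t0 (t0 + Δ)))
    (ρhat : Ω → ℝ)
    (hρ : ∀ ω, ρhat ω = Δ ^ (κ ω) * Real.exp (-(U - Φ) * Δ) /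
        ((Nat.factorial (κ ω) : ℝ) *
          (lam ^ (κ ω) * Real.exp (-lam) / (Nat.factorial (κ ω) : ℝ))) *
      ∏ k ∈ Finset.range (κ ω), (U - φ (χ k ω))) :
    ∫ ω, (ρhat ω) ^ 2 ∂ℙ = Real.exp (2 * (lam - (U - Φ) * Δ)) ∧
    Real.exp (2 * (lam - (U - Φ) * Δ)) ≤ 1 :=
  optimal_estimator_second_moment_general t0 Δ U Φ lam hΔ hΦU φ hφmeas hφ hlam hlampos κ χ hκmeas
    hχmeas hindep hχ ρhat hρ
end
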